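/- arXiv:1505.00156 — 2 statements merged into one kernel-verified Lean document; each statement's English description precedes it below -/
import Mathlib

section
/- Let X be a real Banach space, {S(t)}_{t≥0} a compact C0 semigroup on X, Λ a metric space, and F:Λ×[0,∞)×X→X a continuous map satisfying conditions (F1) and (F2). Let (λₙ) be a sequence in Λ, let (xₙ) be a relatively compact sequence in X, and for each n let uₙ be a mild solution of u̇=−Au+F(λₙ,t,u) with uₙ(0)=xₙ. Then the family (uₙ) is equicontinuous at every t∈[0,∞): for every t≥0 and ε>0 there is δ>0 such that for all n and all t'∈[0,∞) with |t'−t|<δ one has ‖uₙ(t')−uₙ(t)‖≤ε. -/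
open MeasureTheory Set Filter Topology Bornology intervalIntegral

/-- A mild solution of `u' = -Au + G(t,u)` (with `-A` generating the semigroup `S`):
a continuous map `u : [0,∞) → X` satisfying the variation of constants formula. -/
def IsMildSol {X : Type*} [NormedAddCommGroup X] [NormedSpace ℝ X] [CompleteSpace X]
    (S : ℝ → X →L[ℝ] X) (G : ℝ → X → X) (u : ℝ → X) : Prop :=
  ContinuousOn u (Set.Ici (0 : ℝ)) ∧
  ∀ t : ℝ, 0 ≤ t → u t = S t (u 0) + ∫ s in (0:ℝ)..t, S (t - s) (G s (u s))

/-!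
On `[0, T]` the mild solutions are bounded uniformly in `n` by Grönwall's inequality, so the
Duhamel integrands are bounded by a common constant `C`, and then
`‖uₙ b - S (b - a) (uₙ a)‖ ≤ C (b - a)` by the semigroup property. With `a = σ - η` this puts
`{uₙ σ}` within `C η` of the relatively compact set `S η (closedBall 0 R)` for every small `η > 0`,
so `{uₙ σ}` is relatively compact (for `σ = 0` it is `{xₙ}`). Near `t₀`, pick `σ` slightly below
`t₀`: up to errors of order `C (t₀ - σ)`, `uₙ t - uₙ t₀` is `S (t - σ) w - S (t₀ - σ) w` with
`w = uₙ σ` in a fixed compact set, and this is uniformly small because `(τ, w) ↦ S τ w` is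
uniformly continuous on compact sets (Heine–Cantor).
-/

theorem le_mul_exp_of_le_add_mul_integral {φ : ℝ → ℝ} {a b A K : ℝ} (hK : 0 ≤ K)
    (hφ : ContinuousOn φ (Icc a b)) (hle : ∀ s ∈ Icc a b, φ s ≤ A + K * ∫ r in a..s, φ r) :
    ∀ s ∈ Icc a b, φ s ≤ A * Real.exp (K * (s - a)) := by
  have hprim : ∀ s ∈ Icc a b, ∫ r in a..s, φ r ≤ gronwallBound 0 K A (s - a) := by
    refine le_gronwallBound_of_liminf_deriv_right_le (f' := φ) ?_ (fun x hx r hr => ?_)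
      (by simp) (fun x hx => (hle x (Ico_subset_Icc_self hx)).trans_eq (add_comm _ _))
    · rcases le_or_gt a b with h | h
      · have := continuousOn_primitive_interval' (μ := volume)
          (hφ.intervalIntegrable_of_Icc h) left_mem_uIcc
        rwa [uIcc_of_le h] at this
      · simp [Icc_eq_empty_of_lt h]
    · have hxb : Icc x b ∈ 𝓝[Ici x] x := Icc_mem_nhdsGE hx.2
      have : Fact (x ∈ Icc x b) := ⟨left_mem_Icc.2 hx.2.le⟩
      have hderiv : HasDerivWithinAt (fun s => ∫ r in a..s, φ r) (φ x) (Icc x b) x :=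
        integral_hasDerivWithinAt_right
          ((hφ.mono (Icc_subset_Icc_right hx.2.le)).intervalIntegrable_of_Icc hx.1)
          ((hφ.mono (Icc_subset_Icc_left hx.1)).stronglyMeasurableAtFilter_nhdsWithin
            measurableSet_Icc x)
          ((hφ x (Ico_subset_Icc_self hx)).mono (Icc_subset_Icc_left hx.1))
      exact (hderiv.mono_of_mem_nhdsWithin hxb).liminf_right_slope_le hr
  intro s hs
  have hφs := hle s hs
  have hprims := mul_le_mul_of_nonneg_left (hprim s hs) hK
  rcases hK.eq_or_lt with rfl | hKpos
  · simpa using hφs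
  · rw [gronwallBound_of_K_ne_0 hKpos.ne'] at hprims
    calc φ s ≤ A + K * (0 * Real.exp (K * (s - a)) + A / K * (Real.exp (K * (s - a)) - 1)) := by
          linarith
      _ = A * Real.exp (K * (s - a)) := by field_simp; ring

theorem Metric.totallyBounded_of_forall_subset_thickening {α : Type*} [PseudoMetricSpace α]
    {s : Set α} (h : ∀ ε > 0, ∃ t, TotallyBounded t ∧ s ⊆ Metric.thickening ε t) :
    TotallyBounded s := by
  refine Metric.totallyBounded_iff.2 fun ε hε => ?_
  obtain ⟨t, ht, hst⟩ := h (ε / 2) (half_pos hε)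
  obtain ⟨N, hN, htN⟩ := Metric.totallyBounded_iff.1 ht (ε / 2) (half_pos hε)
  refine ⟨N, hN, fun x hx => ?_⟩
  obtain ⟨y, hy, hxy⟩ := Metric.mem_thickening_iff.1 (hst hx)
  obtain ⟨z, hz, hyz⟩ := mem_iUnion₂.1 (htN hy)
  refine mem_iUnion₂.2 ⟨z, hz, ?_⟩
  rw [Metric.mem_ball] at hyz ⊢
  linarith [dist_triangle x y z]

section Semigroup

variable {X : Type*} [NormedAddCommGroup X] [NormedSpace ℝ X] [CompleteSpace X]
  {S : ℝ → X →L[ℝ] X}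

theorem exists_forall_Icc_opNorm_le
    (hScont : ∀ x : X, ContinuousOn (fun t => S t x) (Ici 0)) (T : ℝ) :
    ∃ M, ∀ s ∈ Icc 0 T, ‖S s‖ ≤ M := by
  have hpt : ∀ x : X, ∃ C, ∀ s : Icc (0 : ℝ) T, ‖S s x‖ ≤ C := fun x => by
    obtain ⟨C, hC⟩ := isCompact_Icc.exists_bound_of_continuousOn
      ((hScont x).mono fun _ hs => hs.1)
    exact ⟨C, fun s => hC s s.2⟩
  obtain ⟨M, hM⟩ := banach_steinhaus hpt
  exact ⟨M, fun s hs => hM ⟨s, hs⟩⟩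

theorem continuousOn_semigroup_apply
    (hScont : ∀ x : X, ContinuousOn (fun t => S t x) (Ici 0)) :
    ContinuousOn (fun p : ℝ × X => S p.1 p.2) (Ici 0 ×ˢ univ) := by
  rintro ⟨t₀, x₀⟩ ⟨ht₀, -⟩
  obtain ⟨M, hM⟩ := exists_forall_Icc_opNorm_le hScont (t₀ + 1)
  have hfst : Tendsto Prod.fst (𝓝[Ici 0 ×ˢ univ] (t₀, x₀)) (𝓝[Ici 0] t₀) :=
    tendsto_nhdsWithin_of_tendsto_nhds_of_eventually_within _
      continuousWithinAt_fst.tendsto (eventually_mem_nhdsWithin.mono fun p hp => hp.1)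
  have hsmall : Tendsto (fun p : ℝ × X => S p.1 (p.2 - x₀)) (𝓝[Ici 0 ×ˢ univ] (t₀, x₀)) (𝓝 0) := by
    refine squeeze_zero_norm' (a := fun p : ℝ × X => M * ‖p.2 - x₀‖) ?_ ?_
    · have hIcc : Icc 0 (t₀ + 1) ∈ 𝓝[Ici 0] t₀ :=
        inter_mem self_mem_nhdsWithin (nhdsWithin_le_nhds (Iic_mem_nhds (by linarith)))
      filter_upwards [hfst hIcc] with p hp
      exact ((S p.1).le_opNorm _).trans (by gcongr; exact hM p.1 hp)
    · have h : Tendsto (fun p : ℝ × X => ‖p.2 - x₀‖) (𝓝 (t₀, x₀)) (𝓝 0) := by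
        simpa using (continuous_snd.sub (continuous_const (y := x₀))).norm.tendsto (t₀, x₀)
      simpa using (h.const_mul M).mono_left nhdsWithin_le_nhds
  have hS : Tendsto (fun p : ℝ × X => S p.1 x₀) (𝓝[Ici 0 ×ˢ univ] (t₀, x₀)) (𝓝 (S t₀ x₀)) :=
    (hScont x₀ t₀ ht₀).tendsto.comp hfst
  simpa [ContinuousWithinAt] using hsmall.add hS

theorem continuousOn_semigroup_sub_apply
    (hScont : ∀ x : X, ContinuousOn (fun t => S t x) (Ici 0)) {g : ℝ → X}
    (hg : ContinuousOn g (Ici 0)) (b : ℝ) :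
    ContinuousOn (fun r => S (b - r) (g r)) (Icc 0 b) :=
  (continuousOn_semigroup_apply hScont).comp
    ((continuousOn_const.sub continuousOn_id).prodMk (hg.mono fun _ hr => hr.1))
    fun _ hr => ⟨sub_nonneg.2 hr.2, mem_univ _⟩

end Semigroup

theorem norm_semigroup_sub_apply_le {X : Type*} [NormedAddCommGroup X] [NormedSpace ℝ X]
    {S : ℝ → X →L[ℝ] X} {G : ℝ → X → X} {u : ℝ → X} {T M C : ℝ}
    (hM : ∀ s ∈ Icc 0 T, ‖S s‖ ≤ M) (hGle : ∀ r ∈ Icc 0 T, ‖G r (u r)‖ ≤ C * (1 + ‖u r‖))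
    {b r : ℝ} (hb : b ≤ T) (hr : r ∈ Icc 0 b) :
    ‖S (b - r) (G r (u r))‖ ≤ M * (C * (1 + ‖u r‖)) := by
  have hbr : b - r ∈ Icc 0 T := ⟨sub_nonneg.2 hr.2, by linarith [hr.1]⟩
  calc ‖S (b - r) (G r (u r))‖ ≤ ‖S (b - r)‖ * ‖G r (u r)‖ := (S _).le_opNorm _
    _ ≤ M * (C * (1 + ‖u r‖)) := mul_le_mul (hM _ hbr) (hGle r ⟨hr.1, hr.2.trans hb⟩)
      (norm_nonneg _) ((norm_nonneg _).trans (hM _ hbr))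

namespace IsMildSol

variable {X : Type*} [NormedAddCommGroup X] [NormedSpace ℝ X] [CompleteSpace X]
  {S : ℝ → X →L[ℝ] X} {G : ℝ → X → X} {u : ℝ → X}

theorem eq_semigroup_apply_add_integral
    (hSadd : ∀ t s : ℝ, 0 ≤ t → 0 ≤ s → S (t + s) = (S t).comp (S s))
    (hScont : ∀ x : X, ContinuousOn (fun t => S t x) (Ici 0))
    (hu : IsMildSol S G u) (hG : ContinuousOn (fun s => G s (u s)) (Ici 0))
    {a b : ℝ} (ha : 0 ≤ a) (hab : a ≤ b) :
    u b = S (b - a) (u a) + ∫ r in a..b, S (b - r) (G r (u r)) := by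
  have hint : ∀ c a' b', 0 ≤ a' → a' ≤ b' → b' ≤ c →
      IntervalIntegrable (fun r => S (c - r) (G r (u r))) volume a' b' :=
    fun c a' b' ha' hab' hbc => ((continuousOn_semigroup_sub_apply hScont hG c).mono
      (Icc_subset_Icc ha' hbc)).intervalIntegrable_of_Icc hab'
  have hshift : ∀ r y, r ≤ a → S (b - a) (S (a - r) y) = S (b - r) y := fun r y hr => by
    rw [← ContinuousLinearMap.comp_apply, ← hSadd _ _ (by linarith) (by linarith)]
    ring_nf
  have hpush : S (b - a) (∫ r in (0 : ℝ)..a, S (a - r) (G r (u r))) =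
      ∫ r in (0 : ℝ)..a, S (b - r) (G r (u r)) := by
    rw [← (S (b - a)).intervalIntegral_comp_comm (hint a 0 a le_rfl ha le_rfl)]
    refine integral_congr fun r hr => hshift r _ ?_
    exact (uIcc_of_le ha ▸ hr).2
  have hS0a : S (b - a) (S a (u 0)) = S b (u 0) := by simpa using hshift 0 (u 0) ha
  rw [hu.2 b (ha.trans hab), hu.2 a ha, map_add, hpush, hS0a,
    ← integral_add_adjacent_intervals (hint b 0 a le_rfl ha hab) (hint b a b ha hab le_rfl),
    add_assoc]

theorem norm_sub_semigroup_apply_le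
    (hSadd : ∀ t s : ℝ, 0 ≤ t → 0 ≤ s → S (t + s) = (S t).comp (S s))
    (hScont : ∀ x : X, ContinuousOn (fun t => S t x) (Ici 0))
    (hu : IsMildSol S G u) (hG : ContinuousOn (fun s => G s (u s)) (Ici 0))
    {a b C : ℝ} (ha : 0 ≤ a) (hab : a ≤ b)
    (hC : ∀ r ∈ Icc a b, ‖S (b - r) (G r (u r))‖ ≤ C) :
    ‖u b - S (b - a) (u a)‖ ≤ C * (b - a) := by
  rw [hu.eq_semigroup_apply_add_integral hSadd hScont hG ha hab, add_sub_cancel_left]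
  simpa [abs_of_nonneg (sub_nonneg.2 hab)] using
    norm_integral_le_of_norm_le_const fun r hr => hC r (Ioc_subset_Icc_self (uIoc_of_le hab ▸ hr))

theorem norm_le_add_mul_integral (hu : IsMildSol S G u) {T M C B : ℝ}
    (hM : ∀ s ∈ Icc 0 T, ‖S s‖ ≤ M) (hGle : ∀ r ∈ Icc 0 T, ‖G r (u r)‖ ≤ C * (1 + ‖u r‖))
    (hB : ‖u 0‖ ≤ B) {s : ℝ} (hs : s ∈ Icc 0 T) :
    ‖u s‖ ≤ M * B + M * C * (s + ∫ r in (0 : ℝ)..s, ‖u r‖) := by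
  have hM0 : 0 ≤ M := (norm_nonneg _).trans (hM 0 ⟨le_rfl, hs.1.trans hs.2⟩)
  have hnorm : IntervalIntegrable (fun r => ‖u r‖) volume 0 s :=
    (hu.1.norm.mono Icc_subset_Ici_self).intervalIntegrable_of_Icc hs.1
  have hDuhamel : ‖∫ r in (0 : ℝ)..s, S (s - r) (G r (u r))‖ ≤
      M * C * (s + ∫ r in (0 : ℝ)..s, ‖u r‖) := by
    calc ‖∫ r in (0 : ℝ)..s, S (s - r) (G r (u r))‖
        ≤ ∫ r in (0 : ℝ)..s, M * C * (1 + ‖u r‖) :=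
          norm_integral_le_of_norm_le hs.1
            (Eventually.of_forall fun r hr => (norm_semigroup_sub_apply_le hM hGle hs.2
              (Ioc_subset_Icc_self hr)).trans_eq (mul_assoc _ _ _).symm)
            ((intervalIntegrable_const.add hnorm).const_mul _)
      _ = M * C * (s + ∫ r in (0 : ℝ)..s, ‖u r‖) := by
        rw [intervalIntegral.integral_const_mul, integral_add intervalIntegrable_const hnorm]
        simp
  calc ‖u s‖ ≤ ‖S s (u 0)‖ + ‖∫ r in (0 : ℝ)..s, S (s - r) (G r (u r))‖ := by
        rw [hu.2 s hs.1]; exact norm_add_le _ _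
    _ ≤ M * B + M * C * (s + ∫ r in (0 : ℝ)..s, ‖u r‖) := by
        gcongr
        exact ((S s).le_opNorm _).trans (mul_le_mul (hM s hs) hB (norm_nonneg _) hM0)

theorem norm_le_of_linear_growth (hu : IsMildSol S G u) {T M C B : ℝ}
    (hM : ∀ s ∈ Icc 0 T, ‖S s‖ ≤ M) (hGle : ∀ r ∈ Icc 0 T, ‖G r (u r)‖ ≤ C * (1 + ‖u r‖))
    (hB : ‖u 0‖ ≤ B) : ∀ s ∈ Icc 0 T, ‖u s‖ ≤ M * (B + C * T) * Real.exp (M * C * T) := by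
  intro s hs
  have hT0 : 0 ≤ T := hs.1.trans hs.2
  have hM0 : 0 ≤ M := (norm_nonneg _).trans (hM 0 ⟨le_rfl, hT0⟩)
  have hC0 : 0 ≤ C :=
    nonneg_of_mul_nonneg_left ((norm_nonneg _).trans (hGle 0 ⟨le_rfl, hT0⟩)) (by positivity)
  have hB0 : 0 ≤ B := (norm_nonneg _).trans hB
  have hle : ∀ s ∈ Icc 0 T, ‖u s‖ ≤ M * (B + C * T) + M * C * ∫ r in (0 : ℝ)..s, ‖u r‖ :=
    fun s hs => (hu.norm_le_add_mul_integral hM hGle hB hs).trans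
      (by nlinarith [mul_le_mul_of_nonneg_left hs.2 (mul_nonneg hM0 hC0)])
  calc ‖u s‖ ≤ M * (B + C * T) * Real.exp (M * C * (s - 0)) :=
        le_mul_exp_of_le_add_mul_integral (mul_nonneg hM0 hC0)
          (hu.1.norm.mono Icc_subset_Ici_self) hle s hs
    _ ≤ M * (B + C * T) * Real.exp (M * C * T) := by
        gcongr
        linarith [hs.2]

end IsMildSol

theorem exists_mem_Ioc_mul_lt (C : ℝ) {ε b : ℝ} (hε : 0 < ε) (hb : 0 < b) :
    ∃ η ∈ Ioc 0 b, C * η < ε := by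
  have h : Tendsto (fun η => C * η) (𝓝[>] 0) (𝓝 0) := by
    simpa using ((continuous_const_mul C).tendsto 0).mono_left nhdsWithin_le_nhds
  obtain ⟨η, hηε, hη⟩ := ((h.eventually (gt_mem_nhds hε)).and (Ioc_mem_nhdsGT hb)).exists
  exact ⟨η, hη, hηε⟩

section Family

variable {X : Type*} [NormedAddCommGroup X] [NormedSpace ℝ X] [CompleteSpace X]
  {S : ℝ → X →L[ℝ] X} {ι : Type*} {G : ι → ℝ → X → X} {u : ι → ℝ → X}

theorem isCompact_closure_range_of_isMildSol
    (hSadd : ∀ t s : ℝ, 0 ≤ t → 0 ≤ s → S (t + s) = (S t).comp (S s))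
    (hScont : ∀ x : X, ContinuousOn (fun t => S t x) (Ici 0))
    (hScomp : ∀ t : ℝ, 0 < t → ∀ B : Set X, IsBounded B → IsCompact (closure (S t '' B)))
    (hu : ∀ i, IsMildSol S (G i) (u i)) (hG : ∀ i, ContinuousOn (fun s => G i s (u i s)) (Ici 0))
    {σ R C : ℝ} (hσ : 0 < σ) (hR : ∀ i, ∀ s ∈ Icc 0 σ, ‖u i s‖ ≤ R)
    (hC : ∀ i, ∀ r ∈ Icc 0 σ, ‖S (σ - r) (G i r (u i r))‖ ≤ C) :
    IsCompact (closure (range fun i => u i σ)) := by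
  refine (totallyBounded_closure.2 ?_).isCompact_of_isClosed isClosed_closure
  refine Metric.totallyBounded_of_forall_subset_thickening fun ε hε => ?_
  obtain ⟨η, ⟨hη, hησ⟩, hCη⟩ := exists_mem_Ioc_mul_lt C hε hσ
  refine ⟨S η '' Metric.closedBall 0 R,
    (hScomp η hη _ Metric.isBounded_closedBall).totallyBounded.subset subset_closure, ?_⟩
  rintro _ ⟨i, rfl⟩
  refine Metric.mem_thickening_iff.2 ⟨_, mem_image_of_mem _
    (mem_closedBall_zero_iff.2 (hR i (σ - η) ⟨by linarith, by linarith⟩)), ?_⟩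
  have hseg := (hu i).norm_sub_semigroup_apply_le hSadd hScont (hG i) (a := σ - η) (b := σ)
    (by linarith) (by linarith) fun r hr => hC i r ⟨by linarith [hr.1], hr.2⟩
  rw [dist_eq_norm]
  simp only [sub_sub_cancel] at hseg
  linarith

theorem exists_pos_forall_norm_sub_le_of_isMildSol
    (hSadd : ∀ t s : ℝ, 0 ≤ t → 0 ≤ s → S (t + s) = (S t).comp (S s))
    (hScont : ∀ x : X, ContinuousOn (fun t => S t x) (Ici 0))
    (hu : ∀ i, IsMildSol S (G i) (u i)) (hG : ∀ i, ContinuousOn (fun s => G i s (u i s)) (Ici 0))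
    {T C : ℝ} (hC : ∀ i, ∀ b ∈ Icc 0 T, ∀ r ∈ Icc 0 b, ‖S (b - r) (G i r (u i r))‖ ≤ C)
    (hK : ∀ σ ∈ Icc 0 T, IsCompact (closure (range fun i => u i σ)))
    {t₀ : ℝ} (ht₀ : 0 ≤ t₀) (ht₀T : t₀ < T) {ε : ℝ} (hε : 0 < ε) :
    ∃ δ > 0, ∀ i t, 0 ≤ t → |t - t₀| < δ → ‖u i t - u i t₀‖ ≤ ε := by
  obtain ⟨δ₀, ⟨hδ₀, hδ₀T⟩, hCδ₀⟩ := exists_mem_Ioc_mul_lt (3 * C) (half_pos hε) (sub_pos.2 ht₀T)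
  set σ := max (t₀ - δ₀) 0
  have hσ : σ ∈ Icc 0 T := ⟨le_max_right _ _, max_le (by linarith) (by linarith)⟩
  obtain ⟨δ₁, hδ₁, hS⟩ := Metric.uniformContinuousOn_iff.1
    (((isCompact_Icc (a := 0) (b := T)).prod (hK σ hσ)).uniformContinuousOn_of_continuous
      ((continuousOn_semigroup_apply hScont).mono (prod_mono Icc_subset_Ici_self (subset_univ _))))
    (ε / 2) (half_pos hε)
  refine ⟨min δ₀ δ₁, lt_min hδ₀ hδ₁, fun i t ht htt₀ => ?_⟩
  obtain ⟨htt₀δ₀, htt₀δ₁⟩ := lt_min_iff.1 htt₀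
  have hσt : σ ≤ t := max_le (by linarith [neg_abs_le (t - t₀)]) ht
  have hσt₀ : σ ≤ t₀ := max_le (by linarith) ht₀
  have htT : t ≤ T := by linarith [le_abs_self (t - t₀)]
  have hC0 : 0 ≤ C := (norm_nonneg _).trans (hC i t₀ ⟨ht₀, ht₀T.le⟩ t₀ ⟨ht₀, le_rfl⟩)
  have hseg : ∀ b ∈ Icc σ T, ‖u i b - S (b - σ) (u i σ)‖ ≤ C * (b - σ) := fun b hb =>
    (hu i).norm_sub_semigroup_apply_le hSadd hScont (hG i) hσ.1 hb.1
      fun r hr => hC i b ⟨hσ.1.trans hb.1, hb.2⟩ r ⟨hσ.1.trans hr.1, hr.2⟩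
  have hmem : ∀ τ ∈ Icc σ T, (τ - σ, u i σ) ∈ Icc 0 T ×ˢ closure (range fun i => u i σ) :=
    fun τ hτ => ⟨⟨sub_nonneg.2 hτ.1, by linarith [hσ.1, hτ.2]⟩, subset_closure ⟨i, rfl⟩⟩
  have horbit : ‖S (t - σ) (u i σ) - S (t₀ - σ) (u i σ)‖ < ε / 2 := by
    rw [← dist_eq_norm]
    exact hS _ (hmem t ⟨hσt, htT⟩) _ (hmem t₀ ⟨hσt₀, ht₀T.le⟩)
      (by simpa [Prod.dist_eq, Real.dist_eq] using htt₀δ₁)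
  have hσ_near : t₀ - σ ≤ δ₀ := by linarith [le_max_left (t₀ - δ₀) 0]
  have ht_near : t - σ ≤ 2 * δ₀ := by linarith [le_abs_self (t - t₀)]
  calc ‖u i t - u i t₀‖
      = ‖(u i t - S (t - σ) (u i σ)) - (u i t₀ - S (t₀ - σ) (u i σ)) +
          (S (t - σ) (u i σ) - S (t₀ - σ) (u i σ))‖ := by congr 1; abel
    _ ≤ C * (t - σ) + C * (t₀ - σ) + ε / 2 :=
        (norm_add_le_of_le (norm_sub_le_of_le (hseg t ⟨hσt, htT⟩) (hseg t₀ ⟨hσt₀, ht₀T.le⟩))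
          horbit.le)
    _ ≤ ε := by nlinarith

end Family

theorem statement4_general
    {X : Type*} [NormedAddCommGroup X] [NormedSpace ℝ X] [CompleteSpace X]
    {Λ : Type*} [MetricSpace Λ]
    (S : ℝ → X →L[ℝ] X)
    (hSadd : ∀ t s : ℝ, 0 ≤ t → 0 ≤ s → S (t + s) = (S t).comp (S s))
    (hScont : ∀ x : X, ContinuousOn (fun t => S t x) (Set.Ici (0:ℝ)))
    (hScomp : ∀ t : ℝ, 0 < t → ∀ B : Set X, Bornology.IsBounded B →
      IsCompact (closure (S t '' B)))
    (F : Λ → ℝ → X → X)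
    (hFcont : ContinuousOn (fun p : Λ × ℝ × X => F p.1 p.2.1 p.2.2)
      {p : Λ × ℝ × X | 0 ≤ p.2.1})
    (c : ℝ → ℝ) (hc : Continuous c)
    (hF2 : ∀ (l : Λ) (t : ℝ) (x : X), 0 ≤ t → ‖F l t x‖ ≤ c t * (1 + ‖x‖))
    (l : ℕ → Λ) (x : ℕ → X)
    (hx : IsCompact (closure (Set.range x)))
    (u : ℕ → ℝ → X)
    (hu : ∀ n : ℕ, IsMildSol S (F (l n)) (u n) ∧ u n 0 = x n) :
    ∀ t : ℝ, 0 ≤ t → ∀ ε : ℝ, 0 < ε → ∃ δ : ℝ, 0 < δ ∧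
      ∀ n : ℕ, ∀ t' : ℝ, 0 ≤ t' → |t' - t| < δ → ‖u n t' - u n t‖ ≤ ε := by
  intro t₀ ht₀ ε hε
  set T := t₀ + 1
  obtain ⟨M, hM⟩ := exists_forall_Icc_opNorm_le hScont T
  obtain ⟨Cc, hCc⟩ := isCompact_Icc.exists_bound_of_continuousOn (hc.continuousOn (s := Icc 0 T))
  obtain ⟨B, hB⟩ := (hx.isBounded.subset subset_closure).exists_norm_le
  have hT : (0 : ℝ) ∈ Icc 0 T := ⟨le_rfl, by linarith⟩
  have hM0 : 0 ≤ M := (norm_nonneg _).trans (hM 0 hT)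
  have hCc0 : 0 ≤ Cc := (norm_nonneg _).trans (hCc 0 hT)
  have hG : ∀ n, ContinuousOn (fun s => F (l n) s (u n s)) (Ici 0) := fun n =>
    hFcont.comp (continuousOn_const.prodMk (continuousOn_id.prodMk (hu n).1.1)) fun _ hs => hs
  have hFle : ∀ n, ∀ r ∈ Icc 0 T, ‖F (l n) r (u n r)‖ ≤ Cc * (1 + ‖u n r‖) := fun n r hr =>
    (hF2 _ _ _ hr.1).trans
      (mul_le_mul_of_nonneg_right ((le_abs_self _).trans (hCc r hr)) (by positivity))
  set R := M * (B + Cc * T) * Real.exp (M * Cc * T)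
  have hR : ∀ n, ∀ s ∈ Icc 0 T, ‖u n s‖ ≤ R := fun n =>
    (hu n).1.norm_le_of_linear_growth hM (hFle n) ((hu n).2 ▸ hB _ ⟨n, rfl⟩)
  have hC : ∀ n, ∀ b ∈ Icc 0 T, ∀ r ∈ Icc 0 b,
      ‖S (b - r) (F (l n) r (u n r))‖ ≤ M * (Cc * (1 + R)) := fun n b hb r hr =>
    (norm_semigroup_sub_apply_le hM (hFle n) hb.2 hr).trans
      (by gcongr; exact hR n r ⟨hr.1, hr.2.trans hb.2⟩)
  have hK : ∀ σ ∈ Icc 0 T, IsCompact (closure (range fun n => u n σ)) := by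
    rintro σ ⟨hσ0, hσT⟩
    rcases hσ0.eq_or_lt with rfl | hσ
    · simpa only [(hu _).2] using hx
    · exact isCompact_closure_range_of_isMildSol hSadd hScont hScomp (fun n => (hu n).1) hG hσ
        (fun n s hs => hR n s ⟨hs.1, hs.2.trans hσT⟩) fun n r hr => hC n σ ⟨hσ0, hσT⟩ r hr
  exact exists_pos_forall_norm_sub_le_of_isMildSol hSadd hScont (fun n => (hu n).1) hG hC hK ht₀
    (lt_add_one t₀) hε

/-- equicontinuity of a sequence of mild solutions whose initial
values form a relatively compact sequence, for a compact `C₀` semigroup. -/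
theorem statement4
    {X : Type*} [NormedAddCommGroup X] [NormedSpace ℝ X] [CompleteSpace X]
    {Λ : Type*} [MetricSpace Λ]
    (S : ℝ → X →L[ℝ] X)
    (hS0 : S 0 = 1)
    (hSadd : ∀ t s : ℝ, 0 ≤ t → 0 ≤ s → S (t + s) = (S t).comp (S s))
    (hScont : ∀ x : X, ContinuousOn (fun t => S t x) (Set.Ici (0:ℝ)))
    (hScomp : ∀ t : ℝ, 0 < t → ∀ B : Set X, Bornology.IsBounded B →
      IsCompact (closure (S t '' B)))
    (F : Λ → ℝ → X → X)
    (hFcont : ContinuousOn (fun p : Λ × ℝ × X => F p.1 p.2.1 p.2.2)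
      {p : Λ × ℝ × X | 0 ≤ p.2.1})
    (hF1 : ∀ (l : Λ) (x₀ : X), ∃ W ∈ nhds x₀, ∃ L : ℝ, 0 < L ∧
      ∀ x ∈ W, ∀ y ∈ W, ∀ t : ℝ, 0 ≤ t → ‖F l t x - F l t y‖ ≤ L * ‖x - y‖)
    (c : ℝ → ℝ) (hc : Continuous c) (hc0 : ∀ t : ℝ, 0 ≤ t → 0 ≤ c t)
    (hF2 : ∀ (l : Λ) (t : ℝ) (x : X), 0 ≤ t → ‖F l t x‖ ≤ c t * (1 + ‖x‖))
    (l : ℕ → Λ) (x : ℕ → X)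
    (hx : IsCompact (closure (Set.range x)))
    (u : ℕ → ℝ → X)
    (hu : ∀ n : ℕ, IsMildSol S (F (l n)) (u n) ∧ u n 0 = x n) :
    ∀ t : ℝ, 0 ≤ t → ∀ ε : ℝ, 0 < ε → ∃ δ : ℝ, 0 < δ ∧
      ∀ n : ℕ, ∀ t' : ℝ, 0 ≤ t' → |t' - t| < δ → ‖u n t' - u n t‖ ≤ ε :=
  statement4_general S hSadd hScont hScomp F hFcont c hc hF2 l x hx u hu
end

section
/- Let Ω⊆ℝⁿ be an open bounded set, X = L²(Ω) (real), T>0, N a finite-dimensional subspace of X, and P:X→X the orthogonal projection onto N. Let f:[0,∞)×Ω×ℝ→ℝ be continuous satisfying conditions (a) and (d), let F be the associated Nemytskii operator, and define g:N→N by g(u) := ∫₀ᵀ P F(t,u) dt. If for every u∈N with ‖u‖=1 one has ∫₀ᵀ∫_{{u>0}} f₊(t,x)u(x) dx dt + ∫₀ᵀ∫_{{u<0}} f₋(t,x)u(x) dx dt < 0, then there exists R₀>0 such that ⟨g(u),u⟩ < 0 for every u∈N with ‖u‖≥R₀. -/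
/-!
Since `⟪P x, u⟫ = ⟪x, u⟫` for `u ∈ N`, it suffices to show `⟪∫ F t u dt, u⟫ < 0` for large `u ∈ N`.
If not, there are `u k ∈ N` with `‖u k‖ → ∞` and `⟪∫ F t (u k) dt, u k⟫ ≥ 0`. The unit sphere of
`N` is compact, so along a subsequence `u k / ‖u k‖` converges in `L²` and almost everywhere to some
`v ∈ N` with `‖v‖ = 1`. Then `u k x → +∞` where `v x > 0` and `u k x → -∞` where `v x < 0`, so by
dominated convergence (in `x`, then in `t`, with the bound `|f| ≤ m`) the quantity
`⟪∫ F t (u k) dt, v⟫` tends to the Landesman–Lazer integral of `v`; it differs from the nonnegative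
`⟪∫ F t (u k) dt, u k / ‖u k‖⟫` by a term that tends to `0` because `F` is bounded. Hence that
integral is nonnegative, contradicting (LL−).
-/

open MeasureTheory Set Filter Topology
open scoped RealInnerProductSpace ENNReal

variable {α : Type*} [MeasurableSpace α] {μ : Measure α}

lemma MeasureTheory.L2.real_inner_eq_integral (v w : Lp ℝ 2 μ) : ⟪v, w⟫ = ∫ x, v x * w x ∂μ := by
  simp [L2.inner_def, mul_comm]

lemma MeasureTheory.L2.norm_sub_sq_eq_integral {v w : Lp ℝ 2 μ} {g h : α → ℝ} (hv : v =ᵐ[μ] g)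
    (hw : w =ᵐ[μ] h) : ‖v - w‖ ^ 2 = ∫ x, (g x - h x) ^ 2 ∂μ := by
  rw [← real_inner_self_eq_norm_sq, L2.real_inner_eq_integral]
  refine integral_congr_ae ?_
  filter_upwards [Lp.coeFn_sub v w, hv, hw] with x hx hvx hwx
  rw [hx, Pi.sub_apply, hvx, hwx, sq]

lemma continuousOn_Lp_of_dominated {X : Type*} [TopologicalSpace X] [FirstCountableTopology X]
    [IsFiniteMeasure μ] {G : X → Lp ℝ 2 μ} {g : X → α → ℝ} {s : Set X} {C : ℝ}
    (hG : ∀ t ∈ s, G t =ᵐ[μ] g t) (hg_bound : ∀ t ∈ s, ∀ᵐ x ∂μ, |g t x| ≤ C)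
    (hg_cont : ∀ᵐ x ∂μ, ContinuousOn (fun t => g t x) s) : ContinuousOn G s := by
  -- `‖G t - G t₀‖ = √(∫ (g t - g t₀)²)`, and that integral is continuous in `t` by dominated
  -- convergence.
  intro t₀ ht₀
  have hg_meas : ∀ t ∈ s, AEStronglyMeasurable (g t) μ := fun t ht =>
    (Lp.aestronglyMeasurable _).congr (hG t ht)
  have hdist : ContinuousOn (fun t => ∫ x, (g t x - g t₀ x) ^ 2 ∂μ) s := by
    refine continuousOn_of_dominated (bound := fun _ => (2 * C) ^ 2)
      (fun t ht => ((hg_meas t ht).sub (hg_meas t₀ ht₀)).pow 2) (fun t ht => ?_)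
      (integrable_const _) ?_
    · filter_upwards [hg_bound t ht, hg_bound t₀ ht₀] with x h h₀
      rw [Real.norm_eq_abs, abs_pow, ← sq_abs (2 * C)]
      exact pow_le_pow_left₀ (abs_nonneg _)
        ((abs_sub _ _).trans ((add_le_add h h₀).trans (by rw [← two_mul]; exact le_abs_self _))) 2
    · filter_upwards [hg_cont] with x hx
      exact (hx.sub continuousOn_const).pow 2
  rw [ContinuousWithinAt, tendsto_iff_norm_sub_tendsto_zero]
  have hsqrt : Tendsto (fun t => √(∫ x, (g t x - g t₀ x) ^ 2 ∂μ)) (𝓝[s] t₀) (𝓝 0) := by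
    simpa using (hdist t₀ ht₀).sqrt.tendsto
  refine hsqrt.congr' (eventually_nhdsWithin_of_forall fun t ht => ?_)
  rw [← L2.norm_sub_sq_eq_integral (hG t ht) (hG t₀ ht₀), Real.sqrt_sq (norm_nonneg _)]

lemma IsCompact.exists_subseq_tendsto_ae {E : Type*} [NormedAddCommGroup E] {p : ℝ≥0∞}
    [Fact (1 ≤ p)] {K : Set (Lp E p μ)} (hK : IsCompact K) {w : ℕ → Lp E p μ}
    (hw : ∀ k, w k ∈ K) :
    ∃ v ∈ K, ∃ σ : ℕ → ℕ, StrictMono σ ∧ Tendsto (w ∘ σ) atTop (𝓝 v) ∧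
      ∀ᵐ x ∂μ, Tendsto (fun k => w (σ k) x) atTop (𝓝 (v x)) := by
  obtain ⟨v, hv, φ, hφ, hlim⟩ := hK.tendsto_subseq hw
  obtain ⟨ψ, hψ, hae⟩ := (tendstoInMeasure_of_tendsto_Lp hlim).exists_seq_tendsto_ae
  exact ⟨v, hv, φ ∘ ψ, hφ.comp hψ, hlim.comp hψ.tendsto_atTop, hae⟩

lemma tendsto_comp_mul_ite {φ : ℝ → ℝ} {a b : ℝ} (ha : Tendsto φ atTop (𝓝 a))
    (hb : Tendsto φ atBot (𝓝 b)) {r y : ℕ → ℝ} {w : ℝ} (hr : Tendsto r atTop atTop)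
    (hy : Tendsto (fun k => (r k)⁻¹ * y k) atTop (𝓝 w)) :
    Tendsto (fun k => φ (y k) * w) atTop
      (𝓝 ((if 0 < w then a * w else 0) + if w < 0 then b * w else 0)) := by
  have hry : (fun k => r k * ((r k)⁻¹ * y k)) =ᶠ[atTop] y :=
    (hr.eventually_gt_atTop 0).mono fun k hk => by field_simp
  rcases lt_trichotomy w 0 with hw | rfl | hw
  · simp only [hw, hw.not_gt, if_false, if_true, zero_add]
    exact (hb.comp ((hr.atTop_mul_neg hw hy).congr' hry)).mul_const w
  · simp
  · simp only [hw, hw.not_gt, if_false, if_true, add_zero]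
    exact (ha.comp ((hr.atTop_mul_pos hw hy).congr' hry)).mul_const w

lemma ae_abs_le_of_tendsto {φ : α → ℝ → ℝ} {a : α → ℝ} {l : Filter ℝ} [l.NeBot] {m : ℝ}
    (hφ : ∀ᵐ x ∂μ, ∀ y, |φ x y| ≤ m) (ha : ∀ᵐ x ∂μ, Tendsto (φ x) l (𝓝 (a x))) :
    ∀ᵐ x ∂μ, |a x| ≤ m := by
  filter_upwards [hφ, ha] with x hφx hax using le_of_tendsto' hax.abs hφx

lemma tendsto_inner_of_tendsto_atTop_atBot [IsFiniteMeasure μ] {φ : α → ℝ → ℝ} {a b : α → ℝ}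
    {m : ℝ} (hφ : ∀ᵐ x ∂μ, ∀ y, |φ x y| ≤ m) (ha : ∀ᵐ x ∂μ, Tendsto (φ x) atTop (𝓝 (a x)))
    (hb : ∀ᵐ x ∂μ, Tendsto (φ x) atBot (𝓝 (b x))) (ha_meas : AEStronglyMeasurable a μ)
    (hb_meas : AEStronglyMeasurable b μ) {u G : ℕ → Lp ℝ 2 μ}
    (hG : ∀ k, G k =ᵐ[μ] fun x => φ x (u k x)) (hu : Tendsto (fun k => ‖u k‖) atTop atTop)
    {v : Lp ℝ 2 μ} (huv : ∀ᵐ x ∂μ, Tendsto (fun k => ‖u k‖⁻¹ * u k x) atTop (𝓝 (v x))) :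
    Tendsto (fun k => ⟪G k, v⟫) atTop
      (𝓝 (∫ x in {x | 0 < v x}, a x * v x ∂μ + ∫ x in {x | v x < 0}, b x * v x ∂μ)) := by
  have hv : Integrable v μ := (Lp.memLp v).integrable one_le_two
  have hpos : MeasurableSet {x | 0 < v x} :=
    measurableSet_lt measurable_const (Lp.stronglyMeasurable v).measurable
  have hneg : MeasurableSet {x | v x < 0} :=
    measurableSet_lt (Lp.stronglyMeasurable v).measurable measurable_const
  have hav : Integrable (fun x => a x * v x) μ := hv.bdd_mul ha_meas (by
    simpa only [Real.norm_eq_abs] using ae_abs_le_of_tendsto hφ ha)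
  have hbv : Integrable (fun x => b x * v x) μ := hv.bdd_mul hb_meas (by
    simpa only [Real.norm_eq_abs] using ae_abs_le_of_tendsto hφ hb)
  rw [← integral_indicator hpos, ← integral_indicator hneg,
    ← integral_add (hav.indicator hpos) (hbv.indicator hneg)]
  simp_rw [L2.real_inner_eq_integral]
  refine tendsto_integral_of_dominated_convergence (fun x => m * |v x|)
    (fun k => (Lp.aestronglyMeasurable _).mul hv.1) (hv.abs.const_mul m) (fun k => ?_) ?_
  · filter_upwards [hG k, hφ] with x hGx hφx
    rw [hGx, norm_mul, Real.norm_eq_abs, Real.norm_eq_abs]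
    exact mul_le_mul_of_nonneg_right (hφx _) (abs_nonneg _)
  · have hG' : ∀ᵐ x ∂μ, ∀ k, G k x = φ x (u k x) := ae_all_iff.2 hG
    filter_upwards [hG', ha, hb, huv] with x hGx hax hbx huvx
    simp only [hGx, Set.indicator_apply, Set.mem_ofPred_eq]
    exact tendsto_comp_mul_ite hax hbx hu huvx

lemma continuousOn_setIntegral_mul {X : Type*} [TopologicalSpace X] [FirstCountableTopology X]
    {g : X → α → ℝ} {s : Set X} {m : ℝ} {v : α → ℝ} (hv : Integrable v μ) (S : Set α)
    (hg_meas : ∀ t ∈ s, AEStronglyMeasurable (g t) μ) (hg_bound : ∀ t ∈ s, ∀ᵐ x ∂μ, |g t x| ≤ m)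
    (hg_cont : ∀ᵐ x ∂μ, ContinuousOn (fun t => g t x) s) :
    ContinuousOn (fun t => ∫ x in S, g t x * v x ∂μ) s := by
  refine continuousOn_of_dominated (bound := fun x => m * |v x|)
    (fun t ht => ((hg_meas t ht).mul hv.1).restrict) (fun t ht => ae_restrict_of_ae ?_)
    (hv.abs.const_mul m).restrict (ae_restrict_of_ae ?_)
  · filter_upwards [hg_bound t ht] with x hx
    rw [norm_mul, Real.norm_eq_abs, Real.norm_eq_abs]
    exact mul_le_mul_of_nonneg_right hx (abs_nonneg _)
  · filter_upwards [hg_cont] with x hx using hx.mul continuousOn_const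

lemma tendsto_inner_intervalIntegral_of_dominated {E : Type*} [NormedAddCommGroup E]
    [InnerProductSpace ℝ E] [CompleteSpace E] {T C : ℝ} (hT : 0 ≤ T) {G : ℕ → ℝ → E}
    {L : ℝ → ℝ} (hG_cont : ∀ k, ContinuousOn (G k) (Icc 0 T))
    (hG_bound : ∀ k, ∀ t ∈ Ioc 0 T, ‖G k t‖ ≤ C) {w : E}
    (hlim : ∀ t ∈ Ioc 0 T, Tendsto (fun k => ⟪G k t, w⟫) atTop (𝓝 (L t))) :
    Tendsto (fun k => ⟪∫ t in 0..T, G k t, w⟫) atTop (𝓝 (∫ t in 0..T, L t)) := by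
  have hcomm : ∀ k, ⟪∫ t in 0..T, G k t, w⟫ = ∫ t in 0..T, ⟪G k t, w⟫ := fun k => by
    rw [real_inner_comm, ← innerSL_apply_apply ℝ, ← ContinuousLinearMap.intervalIntegral_comp_comm]
    · simp_rw [innerSL_apply_apply, real_inner_comm]
    · exact (hG_cont k).intervalIntegrable_of_Icc hT
  simp_rw [hcomm]
  have hIoc : ∀ {t}, t ∈ uIoc 0 T → t ∈ Ioc 0 T := fun ht => by rwa [uIoc_of_le hT] at ht
  refine intervalIntegral.tendsto_integral_filter_of_dominated_convergence (fun _ => C * ‖w‖)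
    (Eventually.of_forall fun k => ?_) (Eventually.of_forall fun k => ae_of_all _ fun t ht => ?_)
    intervalIntegrable_const (ae_of_all _ fun t ht => hlim t (hIoc ht))
  · exact (((hG_cont k).inner continuousOn_const).intervalIntegrable_of_Icc hT).def'.1
  · exact (norm_inner_le_norm _ _).trans (mul_le_mul_of_nonneg_right (hG_bound k t (hIoc ht)) (norm_nonneg _))

lemma tendsto_inner_sub_inner_of_norm_le {E : Type*} [NormedAddCommGroup E]
    [InnerProductSpace ℝ E] {a w : ℕ → E} {v : E} {B : ℝ} (ha : ∀ k, ‖a k‖ ≤ B)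
    (hw : Tendsto w atTop (𝓝 v)) : Tendsto (fun k => ⟪a k, w k⟫ - ⟪a k, v⟫) atTop (𝓝 0) := by
  simp_rw [← inner_sub_right]
  have hB : Tendsto (fun k => B * ‖w k - v‖) atTop (𝓝 0) := by
    simpa using (tendsto_iff_norm_sub_tendsto_zero.1 hw).const_mul B
  exact squeeze_zero_norm (fun k => (norm_inner_le_norm _ _).trans
    (mul_le_mul_of_nonneg_right (ha k) (norm_nonneg _))) hB

lemma exists_subseq_normalize_tendsto_ae {p : ℝ≥0∞} [Fact (1 ≤ p)] {N : Submodule ℝ (Lp ℝ p μ)}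
    [FiniteDimensional ℝ N] {u : ℕ → Lp ℝ p μ} (huN : ∀ k, u k ∈ N) (hu0 : ∀ k, u k ≠ 0) :
    ∃ v ∈ N, ‖v‖ = 1 ∧ ∃ σ : ℕ → ℕ, StrictMono σ ∧
      Tendsto (fun k => ‖u (σ k)‖⁻¹ • u (σ k)) atTop (𝓝 v) ∧
      ∀ᵐ x ∂μ, Tendsto (fun k => ‖u (σ k)‖⁻¹ * u (σ k) x) atTop (𝓝 (v x)) := by
  have := FiniteDimensional.proper ℝ N
  have hw_sphere : ∀ k, ‖u k‖⁻¹ • u k ∈ (↑) '' Metric.sphere (0 : N) 1 := fun k =>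
    ⟨⟨_, N.smul_mem _ (huN k)⟩, by simp [norm_smul, hu0 k], rfl⟩
  obtain ⟨v, ⟨v, hv, rfl⟩, σ, hσ, hw_lim, hw_ae⟩ :=
    ((isCompact_sphere (0 : N) 1).image continuous_subtype_val).exists_subseq_tendsto_ae hw_sphere
  refine ⟨v, v.2, by simpa using hv, σ, hσ, hw_lim, ?_⟩
  filter_upwards [hw_ae, ae_all_iff.2 fun k => Lp.coeFn_smul ‖u (σ k)‖⁻¹ (u (σ k))]
    with x hx hsmul
  simpa [hsmul] using hx

noncomputable def landesmanLazerIntegral (μ : Measure α) (T : ℝ) (fp fm : ℝ → α → ℝ)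
    (v : Lp ℝ 2 μ) : ℝ :=
  (∫ t in (0:ℝ)..T, ∫ x in {x | 0 < v x}, fp t x * v x ∂μ) +
    ∫ t in (0:ℝ)..T, ∫ x in {x | v x < 0}, fm t x * v x ∂μ

theorem exists_radius_inner_intervalIntegral_neg [IsFiniteMeasure μ] {T : ℝ} (hT : 0 ≤ T)
    {m C : ℝ} {f : ℝ → α → ℝ → ℝ} {fp fm : ℝ → α → ℝ} {F : ℝ → Lp ℝ 2 μ → Lp ℝ 2 μ}
    (hF : ∀ t, 0 ≤ t → ∀ u, F t u =ᵐ[μ] fun x => f t x (u x))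
    (hF_cont : ∀ u, ContinuousOn (fun t => F t u) (Ici 0))
    (hF_bound : ∀ t, 0 ≤ t → ∀ u, ‖F t u‖ ≤ C)
    (hf_bound : ∀ t, 0 ≤ t → ∀ᵐ x ∂μ, ∀ y, |f t x y| ≤ m)
    (hfp : ∀ t, 0 ≤ t → ∀ᵐ x ∂μ, Tendsto (f t x) atTop (𝓝 (fp t x)))
    (hfm : ∀ t, 0 ≤ t → ∀ᵐ x ∂μ, Tendsto (f t x) atBot (𝓝 (fm t x)))
    (hfp_meas : ∀ t, 0 ≤ t → AEStronglyMeasurable (fp t) μ)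
    (hfm_meas : ∀ t, 0 ≤ t → AEStronglyMeasurable (fm t) μ)
    (hfp_cont : ∀ᵐ x ∂μ, ContinuousOn (fun t => fp t x) (Ici 0))
    (hfm_cont : ∀ᵐ x ∂μ, ContinuousOn (fun t => fm t x) (Ici 0))
    (N : Submodule ℝ (Lp ℝ 2 μ)) [FiniteDimensional ℝ N]
    (hLL : ∀ v ∈ N, ‖v‖ = 1 → landesmanLazerIntegral μ T fp fm v < 0) :
    ∃ R, 0 < R ∧ ∀ u ∈ N, R ≤ ‖u‖ → ⟪∫ t in (0:ℝ)..T, F t u, u⟫ < 0 := by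
  by_contra! hcon
  choose u huN hu_norm hu_nonneg using fun k : ℕ => hcon (k + 1) k.cast_add_one_pos
  have hu0 : ∀ k, u k ≠ 0 := fun k => norm_pos_iff.1 (k.cast_add_one_pos.trans_le (hu_norm k))
  obtain ⟨v, hvN, hv, σ, hσ, hw_lim, hv_ae⟩ := exists_subseq_normalize_tendsto_ae huN hu0
  have hu_lim : Tendsto (fun k => ‖u (σ k)‖) atTop atTop :=
    (tendsto_atTop_mono hu_norm (tendsto_atTop_add_const_right _ 1 tendsto_natCast_atTop_atTop)).comp
      hσ.tendsto_atTop
  have hw_nonneg : ∀ k, 0 ≤ ⟪∫ t in (0:ℝ)..T, F t (u k), ‖u k‖⁻¹ • u k⟫ := fun k => by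
    rw [real_inner_smul_right]
    exact mul_nonneg (inv_nonneg.2 (norm_nonneg _)) (hu_nonneg k)
  have hF_int : ∀ u, ‖∫ t in (0:ℝ)..T, F t u‖ ≤ C * |T - 0| := fun u =>
    intervalIntegral.norm_integral_le_of_norm_le_const fun t ht =>
      hF_bound t (by rw [uIoc_of_le hT] at ht; exact ht.1.le) u
  have hv_int : Integrable v μ := (Lp.memLp v).integrable one_le_two
  have hA := continuousOn_setIntegral_mul hv_int {x | 0 < v x} hfp_meas
    (fun t ht => ae_abs_le_of_tendsto (hf_bound t ht) (hfp t ht)) hfp_cont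
  have hB := continuousOn_setIntegral_mul hv_int {x | v x < 0} hfm_meas
    (fun t ht => ae_abs_le_of_tendsto (hf_bound t ht) (hfm t ht)) hfm_cont
  have hlim : Tendsto (fun k => ⟪∫ t in (0:ℝ)..T, F t (u (σ k)), v⟫) atTop
      (𝓝 (landesmanLazerIntegral μ T fp fm v)) := by
    rw [landesmanLazerIntegral, ← intervalIntegral.integral_add
      ((hA.mono Icc_subset_Ici_self).intervalIntegrable_of_Icc hT)
      ((hB.mono Icc_subset_Ici_self).intervalIntegrable_of_Icc hT)]
    refine tendsto_inner_intervalIntegral_of_dominated hT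
      (fun k => (hF_cont _).mono Icc_subset_Ici_self) (fun k t ht => hF_bound t ht.1.le _)
      fun t ht => ?_
    exact tendsto_inner_of_tendsto_atTop_atBot (hf_bound t ht.1.le) (hfp t ht.1.le) (hfm t ht.1.le)
      (hfp_meas t ht.1.le) (hfm_meas t ht.1.le) (fun k => hF t ht.1.le _) hu_lim hv_ae
  have hdiff := tendsto_inner_sub_inner_of_norm_le (fun k => hF_int (u (σ k))) hw_lim
  have := ge_of_tendsto' (hdiff.add hlim) fun k => by simpa using hw_nonneg (σ k)
  linarith [hLL v hvN hv]

theorem statement15_general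
    (n : ℕ) (Ω : Set (EuclideanSpace ℝ (Fin n)))
    (hΩo : IsOpen Ω) (hΩb : Bornology.IsBounded Ω)
    (T : ℝ) (hT : 0 < T)
    (N : Submodule ℝ (Lp ℝ 2 (volume.restrict Ω)))
    (hNfin : FiniteDimensional ℝ ↥N)
    -- `P` is the orthogonal projection onto `N`
    (P : Lp ℝ 2 (volume.restrict Ω) →L[ℝ] Lp ℝ 2 (volume.restrict Ω))
    (hPorth : ∀ x : Lp ℝ 2 (volume.restrict Ω), ∀ y ∈ N, ⟪x - P x, y⟫ = (0:ℝ))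
    (f : ℝ → EuclideanSpace ℝ (Fin n) → ℝ → ℝ)
    (hfc : ContinuousOn (fun p : ℝ × EuclideanSpace ℝ (Fin n) × ℝ =>
      f p.1 p.2.1 p.2.2) (Set.Ici (0:ℝ) ×ˢ Ω ×ˢ Set.univ))
    -- condition (a): boundedness
    (m : ℝ) (hm : 0 < m)
    (hfa : ∀ t : ℝ, 0 ≤ t → ∀ x ∈ Ω, ∀ y : ℝ, |f t x y| ≤ m)
    -- condition (d): limits at ±∞
    (fp fm : ℝ → EuclideanSpace ℝ (Fin n) → ℝ)
    (hfpc : ContinuousOn (fun p : ℝ × EuclideanSpace ℝ (Fin n) => fp p.1 p.2)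
      (Set.Ici (0:ℝ) ×ˢ Ω))
    (hfmc : ContinuousOn (fun p : ℝ × EuclideanSpace ℝ (Fin n) => fm p.1 p.2)
      (Set.Ici (0:ℝ) ×ˢ Ω))
    (hfp : ∀ t : ℝ, 0 ≤ t → ∀ x ∈ Ω,
      Filter.Tendsto (fun y => f t x y) Filter.atTop (nhds (fp t x)))
    (hfm : ∀ t : ℝ, 0 ≤ t → ∀ x ∈ Ω,
      Filter.Tendsto (fun y => f t x y) Filter.atBot (nhds (fm t x)))
    -- `F` is the Nemytskii operator associated with `f`
    (F : ℝ → Lp ℝ 2 (volume.restrict Ω) → Lp ℝ 2 (volume.restrict Ω))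
    (hF : ∀ t : ℝ, 0 ≤ t → ∀ u : Lp ℝ 2 (volume.restrict Ω),
      ∀ᵐ x ∂(volume.restrict Ω), F t u x = f t x (u x))
    -- Landesman–Lazer type condition (LL−)
    (hLL : ∀ u : Lp ℝ 2 (volume.restrict Ω), u ∈ N → ‖u‖ = 1 →
      (∫ t in (0:ℝ)..T, ∫ x in {x | 0 < u x}, fp t x * u x ∂(volume.restrict Ω)) +
        (∫ t in (0:ℝ)..T, ∫ x in {x | u x < 0}, fm t x * u x ∂(volume.restrict Ω)) < 0) :
    ∃ R₀ : ℝ, 0 < R₀ ∧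
      ∀ u : Lp ℝ 2 (volume.restrict Ω), u ∈ N → R₀ ≤ ‖u‖ →
        ⟪∫ t in (0:ℝ)..T, P (F t u), u⟫ < 0 := by
  have hΩ := hΩo.measurableSet
  have : IsFiniteMeasure (volume.restrict Ω) := isFiniteMeasure_restrict.2 hΩb.measure_lt_top.ne
  have hf_bound : ∀ t, 0 ≤ t → ∀ᵐ x ∂(volume.restrict Ω), ∀ y, |f t x y| ≤ m :=
    fun t ht => ae_restrict_of_forall_mem hΩ (hfa t ht)
  have hF_cont : ∀ u, ContinuousOn (fun t => F t u) (Ici 0) := fun u =>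
    continuousOn_Lp_of_dominated (fun t ht => hF t ht u)
      (fun t ht => (hf_bound t ht).mono fun x hx => hx _)
      (ae_restrict_of_forall_mem hΩ fun x hx =>
        hfc.uncurry_right (f := fun t (q : _ × ℝ) => f t q.1 q.2) (x, u x) (mk_mem_prod hx (mem_univ _)))
  have hF_bound : ∀ t, 0 ≤ t → ∀ u, ‖F t u‖ ≤ _ * m := fun t ht u =>
    Lp.norm_le_of_ae_bound hm.le (by
      filter_upwards [hF t ht u, hf_bound t ht] with x hFx hfx
      rw [hFx]
      exact hfx _)
  obtain ⟨R, hR, hneg⟩ := exists_radius_inner_intervalIntegral_neg hT.le hF hF_cont hF_bound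
    hf_bound (fun t ht => ae_restrict_of_forall_mem hΩ (hfp t ht))
    (fun t ht => ae_restrict_of_forall_mem hΩ (hfm t ht))
    (fun t ht => (hfpc.uncurry_left t ht).aestronglyMeasurable hΩ)
    (fun t ht => (hfmc.uncurry_left t ht).aestronglyMeasurable hΩ)
    (ae_restrict_of_forall_mem hΩ fun x hx => hfpc.uncurry_right x hx)
    (ae_restrict_of_forall_mem hΩ fun x hx => hfmc.uncurry_right x hx) N hLL
  refine ⟨R, hR, fun u hu hRu => ?_⟩
  have hPu := hPorth (∫ t in (0:ℝ)..T, F t u) u hu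
  rw [inner_sub_left, sub_eq_zero] at hPu
  rw [P.intervalIntegral_comp_comm
    (((hF_cont u).mono Icc_subset_Ici_self).intervalIntegrable_of_Icc hT.le), ← hPu]
  exact hneg u hu hRu

/-- under the Landesman–Lazer type condition (LL−), the averaged
map `g(u) = ∫₀ᵀ P F(t,u) dt` satisfies `⟪g(u),u⟫ < 0` on `N` outside a large ball. -/
theorem statement15
    (n : ℕ) (Ω : Set (EuclideanSpace ℝ (Fin n)))
    (hΩo : IsOpen Ω) (hΩb : Bornology.IsBounded Ω)
    (T : ℝ) (hT : 0 < T)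
    (N : Submodule ℝ (Lp ℝ 2 (volume.restrict Ω)))
    (hNfin : FiniteDimensional ℝ ↥N)
    -- `P` is the orthogonal projection onto `N`
    (P : Lp ℝ 2 (volume.restrict Ω) →L[ℝ] Lp ℝ 2 (volume.restrict Ω))
    (hPmem : ∀ x : Lp ℝ 2 (volume.restrict Ω), P x ∈ N)
    (hPorth : ∀ x : Lp ℝ 2 (volume.restrict Ω), ∀ y ∈ N, ⟪x - P x, y⟫ = (0:ℝ))
    (f : ℝ → EuclideanSpace ℝ (Fin n) → ℝ → ℝ)
    (hfc : ContinuousOn (fun p : ℝ × EuclideanSpace ℝ (Fin n) × ℝ =>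
      f p.1 p.2.1 p.2.2) (Set.Ici (0:ℝ) ×ˢ Ω ×ˢ Set.univ))
    -- condition (a): boundedness
    (m : ℝ) (hm : 0 < m)
    (hfa : ∀ t : ℝ, 0 ≤ t → ∀ x ∈ Ω, ∀ y : ℝ, |f t x y| ≤ m)
    -- condition (d): limits at ±∞
    (fp fm : ℝ → EuclideanSpace ℝ (Fin n) → ℝ)
    (hfpc : ContinuousOn (fun p : ℝ × EuclideanSpace ℝ (Fin n) => fp p.1 p.2)
      (Set.Ici (0:ℝ) ×ˢ Ω))
    (hfmc : ContinuousOn (fun p : ℝ × EuclideanSpace ℝ (Fin n) => fm p.1 p.2)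
      (Set.Ici (0:ℝ) ×ˢ Ω))
    (hfp : ∀ t : ℝ, 0 ≤ t → ∀ x ∈ Ω,
      Filter.Tendsto (fun y => f t x y) Filter.atTop (nhds (fp t x)))
    (hfm : ∀ t : ℝ, 0 ≤ t → ∀ x ∈ Ω,
      Filter.Tendsto (fun y => f t x y) Filter.atBot (nhds (fm t x)))
    -- `F` is the Nemytskii operator associated with `f`
    (F : ℝ → Lp ℝ 2 (volume.restrict Ω) → Lp ℝ 2 (volume.restrict Ω))
    (hF : ∀ t : ℝ, 0 ≤ t → ∀ u : Lp ℝ 2 (volume.restrict Ω),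
      ∀ᵐ x ∂(volume.restrict Ω), F t u x = f t x (u x))
    -- Landesman–Lazer type condition (LL−)
    (hLL : ∀ u : Lp ℝ 2 (volume.restrict Ω), u ∈ N → ‖u‖ = 1 →
      (∫ t in (0:ℝ)..T, ∫ x in {x | 0 < u x}, fp t x * u x ∂(volume.restrict Ω)) +
        (∫ t in (0:ℝ)..T, ∫ x in {x | u x < 0}, fm t x * u x ∂(volume.restrict Ω)) < 0) :
    ∃ R₀ : ℝ, 0 < R₀ ∧
      ∀ u : Lp ℝ 2 (volume.restrict Ω), u ∈ N → R₀ ≤ ‖u‖ →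
        ⟪∫ t in (0:ℝ)..T, P (F t u), u⟫ < 0 :=
  statement15_general n Ω hΩo hΩb T hT N hNfin P hPorth f hfc m hm hfa fp fm hfpc hfmc hfp hfm F hF
    hLL
end
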